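/- Let W(y) = min_{k∈ℤ} (y − k)² and let γ > 0. For every T ∈ (0, 1), the homogenised velocity satisfies f_γ(T) = 0 if and only if T ≤ γ/(2+γ); that is, the pinning threshold for the piecewise-quadratic potential is T_γ = γ/(2+γ). -/

import Mathlib

/-!
On each branch `(t - n) ^ 2` of `Wq`, the energy `T t + (t - n) ^ 2 + γ/2 (t - y) ^ 2` is a
quadratic in `t` whose minimum is, up to a term independent of `n`, `γ/(2+γ) (y - T/γ - n) ^ 2`.
So the global minimizer takes the branch `n = round (y - T/γ)` and is the explicit point
`stepq γ T y`. Since `round x ≤ x + 1/2`, every step moves left by at least `T/γ - 1/(2+γ)`,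
which forces a positive velocity when `T > γ/(2+γ)`; when `T ≤ γ/(2+γ)` the point `-T/2` is
fixed by the step, and the constant orbit has velocity `0`.
-/

open Filter

/-- The 1-periodic piecewise-quadratic potential `W y = min_{k ∈ ℤ} (y - k) ^ 2`. -/
noncomputable def Wq (y : ℝ) : ℝ := ⨅ k : ℤ, (y - (k : ℝ)) ^ 2

/-- An orbit of the linearized minimizing-movement scheme with parameter `T` and
spatial/temporal ratio `γ`: each `y (i+1)` is a global minimizer over `ℝ` of
`t ↦ T * t + W t + γ / 2 * (t - y i) ^ 2`. -/
def IsOrbit (W : ℝ → ℝ) (γ T : ℝ) (y : ℕ → ℝ) : Prop :=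
  ∀ i : ℕ, ∀ t : ℝ,
    T * y (i + 1) + W (y (i + 1)) + γ / 2 * (y (i + 1) - y i) ^ 2 ≤
      T * t + W t + γ / 2 * (t - y i) ^ 2

lemma Wq_le_sq_sub (t : ℝ) (k : ℤ) : Wq t ≤ (t - k) ^ 2 :=
  ciInf_le ⟨0, Set.forall_mem_range.2 fun _ => sq_nonneg _⟩ k

lemma le_Wq {a t : ℝ} (h : ∀ k : ℤ, a ≤ (t - k) ^ 2) : a ≤ Wq t :=
  le_ciInf h

noncomputable def stepq (γ T y : ℝ) : ℝ :=
  (2 * round (y - T / γ) + γ * y - T) / (2 + γ)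

lemma branch_energy_eq {γ : ℝ} (hγ : γ ≠ 0) (h2γ : 2 + γ ≠ 0) (T y s n : ℝ) :
    T * s + (s - n) ^ 2 + γ / 2 * (s - y) ^ 2 =
      γ / 2 * (y ^ 2 - (y - T / γ) ^ 2) + γ / (2 + γ) * (y - T / γ - n) ^ 2 +
        (2 + γ) / 2 * (s - (2 * n + γ * y - T) / (2 + γ)) ^ 2 := by
  field_simp
  ring

lemma stepq_isMin {γ : ℝ} (hγ : 0 < γ) (T y s : ℝ) :
    T * stepq γ T y + Wq (stepq γ T y) + γ / 2 * (stepq γ T y - y) ^ 2 ≤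
      T * s + Wq s + γ / 2 * (s - y) ^ 2 := by
  have h2γ : 0 < 2 + γ := by linarith
  have branch := branch_energy_eq hγ.ne' h2γ.ne' T y
  set x := y - T / γ
  set E := γ / 2 * (y ^ 2 - x ^ 2) + γ / (2 + γ) * (x - round x) ^ 2 with hE
  have branch_ge (k : ℤ) : E ≤ T * s + (s - k) ^ 2 + γ / 2 * (s - y) ^ 2 := by
    have hround : (x - round x) ^ 2 ≤ (x - k) ^ 2 := sq_le_sq.2 (round_le x k)
    rw [branch s k, hE]
    have := mul_le_mul_of_nonneg_left hround (div_pos hγ h2γ).le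
    have := mul_nonneg (div_pos h2γ two_pos).le (sq_nonneg (s - (2 * k + γ * y - T) / (2 + γ)))
    linarith
  calc T * stepq γ T y + Wq (stepq γ T y) + γ / 2 * (stepq γ T y - y) ^ 2
      ≤ T * stepq γ T y + (stepq γ T y - round x) ^ 2 + γ / 2 * (stepq γ T y - y) ^ 2 := by
        gcongr
        exact Wq_le_sq_sub _ _
    _ = E := by
        rw [branch, hE]
        simp [stepq, x]
    _ ≤ T * s + Wq s + γ / 2 * (s - y) ^ 2 := by
        have := le_Wq (a := E - T * s - γ / 2 * (s - y) ^ 2) (t := s)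
          fun k => by linarith [branch_ge k]
        linarith

lemma isOrbit_iterate_stepq {γ : ℝ} (hγ : 0 < γ) (T y₀ : ℝ) :
    IsOrbit Wq γ T (fun i => (stepq γ T)^[i] y₀) := by
  intro i t
  simp only [Function.iterate_succ_apply']
  exact stepq_isMin hγ T _ t

lemma sub_div_le_sub_stepq {γ : ℝ} (hγ : 0 < γ) (T y : ℝ) :
    T / γ - 1 / (2 + γ) ≤ y - stepq γ T y := by
  have h2γ : 0 < 2 + γ := by linarith
  have hround := round_le_add_half (y - T / γ)
  unfold stepq
  generalize (round (y - T / γ) : ℝ) = m at hround ⊢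
  calc T / γ - 1 / (2 + γ) = (2 * (-1 / 2) + T * (2 + γ) / γ) / (2 + γ) := by
        field_simp; ring
    _ ≤ (2 * (y - T / γ - m) + T * (2 + γ) / γ) / (2 + γ) := by gcongr; linarith
    _ = y - (2 * m + γ * y - T) / (2 + γ) := by field_simp; ring

lemma stepq_neg_half {γ T : ℝ} (hγ : 0 < γ) (hT : 0 < T) (hTγ : T * (2 + γ) ≤ γ) :
    stepq γ T (-T / 2) = -T / 2 := by
  have h2γ : 0 < 2 + γ := by linarith
  have hround : round (-T / 2 - T / γ) = 0 := by
    rw [round_eq_zero_iff, Set.mem_Ico]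
    have : -T / 2 - T / γ = -(T * (2 + γ) / γ) / 2 := by field_simp; ring
    rw [this]
    constructor
    · have : T * (2 + γ) / γ ≤ 1 := by rwa [div_le_one hγ]
      linarith
    · have : 0 < T * (2 + γ) / γ := by positivity
      linarith
  rw [stepq, hround]
  field_simp
  ring

lemma le_sub_iterate_div {f : ℝ → ℝ} {δ : ℝ} (hf : ∀ y, δ ≤ y - f y) (y₀ : ℝ)
    {n : ℕ} (hn : 0 < n) : δ ≤ (y₀ - f^[n] y₀) / n := by
  have drift : ∀ n : ℕ, n * δ ≤ y₀ - f^[n] y₀ := by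
    intro n
    induction n with
    | zero => simp
    | succ k ih =>
      rw [Function.iterate_succ_apply']
      push_cast
      linarith [hf (f^[k] y₀)]
  rw [le_div_iff₀ (by exact_mod_cast hn)]
  linarith [drift n]

theorem stmt_18 (γ : ℝ) (hγ : 0 < γ)
    -- the homogenised velocity `fγ` of the linearized scheme for the potential `Wq`
    (fγ : ℝ → ℝ)
    (hfγ : ∀ T : ℝ, ∀ y : ℕ → ℝ, IsOrbit Wq γ T y →
      Filter.Tendsto (fun i : ℕ => (y 0 - y i) / (i : ℝ)) Filter.atTop (nhds (fγ T))) :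
    ∀ T : ℝ, 0 < T → T < 1 → (fγ T = 0 ↔ T ≤ γ / (2 + γ)) := by
  intro T hT _
  have h2γ : 0 < 2 + γ := by linarith
  rw [le_div_iff₀ h2γ]
  constructor
  · intro hf
    by_contra! hTγ
    have hδ : 0 < T / γ - 1 / (2 + γ) := by
      rw [sub_pos, div_lt_div_iff₀ h2γ hγ]
      linarith
    have := ge_of_tendsto (hfγ T _ (isOrbit_iterate_stepq hγ T 0)) <| by
      filter_upwards [eventually_gt_atTop 0] with i hi
      exact le_sub_iterate_div (sub_div_le_sub_stepq hγ T) 0 hi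
    linarith
  · intro hTγ
    have hconst := Function.iterate_fixed (stepq_neg_half hγ hT hTγ)
    have := hfγ T _ (isOrbit_iterate_stepq hγ T (-T / 2))
    simp only [hconst, sub_self, zero_div] at this
    exact tendsto_nhds_unique this tendsto_const_nhds
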